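/- arXiv:math/0506155 — 2 statements merged into one kernel-verified Lean document; each statement's English description precedes it below -/
import Mathlib

section
/- If A = {a_1, ..., a_n} and B = {b_1, ..., b_m} are perfect extremal multi Skolem sets, then C = A ∪ {b_1 + 2n, ..., b_m + 2n} is a perfect extremal multi Skolem set of order n + m. -/
lemma icc_glue (a b c : ℕ) (h1 : a ≤ b + 1) (h2 : b ≤ c) :
    (Finset.Icc a b).val + (Finset.Icc (b+1) c).val = (Finset.Icc a c).val := by
  have hd : Disjoint (Finset.Icc a b) (Finset.Icc (b+1) c) := by
    rw [Finset.disjoint_left]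
    intro x hx hy
    simp only [Finset.mem_Icc] at hx hy
    omega
  have : (Finset.Icc a b).val + (Finset.Icc (b+1) c).val
      = ((Finset.Icc a b).disjUnion (Finset.Icc (b+1) c) hd).val := rfl
  rw [this]
  congr 1
  rw [Finset.disjUnion_eq_union]
  ext x
  simp only [Finset.mem_Icc, Finset.mem_union]
  omega

lemma gauss (N : ℕ) : 2 * ∑ x ∈ Finset.Icc 1 N, x = N * (N + 1) := by
  induction N with
  | zero => simp
  | succ k ih =>
    rw [Finset.sum_Icc_succ_top (by omega : 1 ≤ k + 1)]
    have : (k + 1) * (k + 1 + 1) = k * (k + 1) + 2 * (k + 1) := by ring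
    omega

lemma sum_lb : ∀ (k : ℕ) (F : Finset ℕ), F.card = k → (0 ∉ F) →
    k * (k + 1) ≤ 2 * ∑ x ∈ F, x := by
  intro k
  induction k with
  | zero => intro F h _; simp
  | succ r ih =>
    intro F hcard h0
    have hne : F.Nonempty := by rw [← Finset.card_pos, hcard]; omega
    set M := F.max' hne with hM
    have hMF : M ∈ F := F.max'_mem hne
    have hsub : F ⊆ Finset.Icc 1 M := by
      intro x hx
      simp only [Finset.mem_Icc]
      constructor
      · rcases Nat.eq_zero_or_pos x with h | h
        · exact absurd (h ▸ hx) h0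
        · exact h
      · exact F.le_max' x hx
    have hMr : r + 1 ≤ M := by
      have h' := Finset.card_le_card hsub
      rw [hcard, Nat.card_Icc] at h'
      omega
    have hF' : (F.erase M).card = r := by
      rw [Finset.card_erase_of_mem hMF, hcard]; omega
    have h0' : 0 ∉ F.erase M := fun h => h0 (Finset.mem_of_mem_erase h)
    have := ih (F.erase M) hF' h0'
    have hsum : ∑ x ∈ F, x = M + ∑ x ∈ F.erase M, x :=
      (Finset.add_sum_erase F id hMF).symm
    have hq : (r + 1) * (r + 1 + 1) = r * (r + 1) + 2 * (r + 1) := by ring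
    omega

lemma eq_Icc : ∀ (k : ℕ) (F : Finset ℕ), F.card = k → (0 ∉ F) →
    2 * ∑ x ∈ F, x = k * (k + 1) → F = Finset.Icc 1 k := by
  intro k
  induction k with
  | zero => intro F h _ _; simpa using Finset.card_eq_zero.mp h
  | succ r ih =>
    intro F hcard h0 hsum
    have hne : F.Nonempty := by rw [← Finset.card_pos, hcard]; omega
    set M := F.max' hne with hM
    have hMF : M ∈ F := F.max'_mem hne
    have hsub : F ⊆ Finset.Icc 1 M := by
      intro x hx
      simp only [Finset.mem_Icc]
      constructor
      · rcases Nat.eq_zero_or_pos x with h | h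
        · exact absurd (h ▸ hx) h0
        · exact h
      · exact F.le_max' x hx
    have hMr : r + 1 ≤ M := by
      have h' := Finset.card_le_card hsub
      rw [hcard, Nat.card_Icc] at h'
      omega
    have hF' : (F.erase M).card = r := by
      rw [Finset.card_erase_of_mem hMF, hcard]; omega
    have h0' : 0 ∉ F.erase M := fun h => h0 (Finset.mem_of_mem_erase h)
    have hlb := sum_lb r (F.erase M) hF' h0'
    have hsplit : ∑ x ∈ F, x = M + ∑ x ∈ F.erase M, x :=
      (Finset.add_sum_erase F id hMF).symm
    have hq : (r + 1) * (r + 1 + 1) = r * (r + 1) + 2 * (r + 1) := by ring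
    have hMeq : M = r + 1 := by omega
    have hrec : 2 * ∑ x ∈ F.erase M, x = r * (r + 1) := by omega
    have hIH := ih (F.erase M) hF' h0' hrec
    have : F = insert M (F.erase M) := (Finset.insert_erase hMF).symm
    rw [this, hIH, hMeq]
    ext x
    simp only [Finset.mem_insert, Finset.mem_Icc]
    omega

/-- In an extremal partition of orders, the small elements are exactly {1..r} and the
large ones {r+1..2r}. -/
lemma low_high {r : ℕ} (s t a : Fin r → ℕ)
    (h : ∀ i, t i < s i ∧ s i - t i = a i)
    (hms : Multiset.map s Finset.univ.val + Multiset.map t Finset.univ.val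
      = (Finset.Icc 1 (2 * r)).val)
    (hsum : ∑ i, a i = r ^ 2) :
    Multiset.map t Finset.univ.val = (Finset.Icc 1 r).val ∧
    Multiset.map s Finset.univ.val = (Finset.Icc (r + 1) (2 * r)).val := by
  set T := Multiset.map t Finset.univ.val with hT
  set S := Multiset.map s Finset.univ.val with hS
  have hseq : ∀ i, s i = t i + a i := fun i => by have := h i; omega
  have hTcard : Multiset.card T = r := by
    simp [hT]
  have hSsum : S.sum = T.sum + r ^ 2 := by
    have : S.sum = ∑ i, s i := rfl
    have hT' : T.sum = ∑ i, t i := rfl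
    rw [this, hT']
    calc ∑ i, s i = ∑ i, (t i + a i) := by
          exact Finset.sum_congr rfl (fun i _ => hseq i)
      _ = ∑ i, t i + ∑ i, a i := Finset.sum_add_distrib
      _ = ∑ i, t i + r ^ 2 := by rw [hsum]
  have htot : S.sum + T.sum = (Finset.Icc 1 (2 * r)).val.sum := by rw [← hms]; simp
  have hvs : (Finset.Icc 1 (2 * r)).val.sum = ∑ x ∈ Finset.Icc 1 (2 * r), x := by
    rw [Finset.sum_eq_multiset_sum, Multiset.map_id']
  have hg : 2 * (Finset.Icc 1 (2 * r)).val.sum = (2 * r) * (2 * r + 1) := by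
    rw [hvs]; exact gauss (2 * r)
  have hTsum : 2 * T.sum = r * (r + 1) := by nlinarith [htot, hSsum, hg]
  -- T is nodup
  have hnd : (Finset.Icc 1 (2 * r)).val.Nodup := (Finset.Icc 1 (2 * r)).nodup
  have hndT : T.Nodup := by
    apply Multiset.nodup_of_le (Multiset.le_add_left T S)
    rw [hms]; exact hnd
  have h0T : (0 : ℕ) ∉ T := by
    intro h0
    have : (0 : ℕ) ∈ S + T := Multiset.mem_add.mpr (Or.inr h0)
    rw [hms, Finset.mem_val, Finset.mem_Icc] at this
    omega
  -- convert to finset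
  have hval : T.toFinset.val = T := Multiset.dedup_eq_self.mpr hndT
  have hcF : T.toFinset.card = r := by
    rw [Finset.card_def, hval]; exact hTcard
  have h0F : 0 ∉ T.toFinset := by rw [Multiset.mem_toFinset]; exact h0T
  have hsF : 2 * ∑ x ∈ T.toFinset, x = r * (r + 1) := by
    rw [Finset.sum_eq_multiset_sum, hval, Multiset.map_id']
    exact hTsum
  have hFeq : T.toFinset = Finset.Icc 1 r := eq_Icc r T.toFinset hcF h0F hsF
  have hTeq : T = (Finset.Icc 1 r).val := by rw [← hval, hFeq]
  refine ⟨hTeq, ?_⟩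
  have hglue : (Finset.Icc 1 r).val + (Finset.Icc (r + 1) (2 * r)).val
      = (Finset.Icc 1 (2 * r)).val := icc_glue 1 r (2 * r) (by omega) (by omega)
  have : S + (Finset.Icc 1 r).val = (Finset.Icc (r + 1) (2 * r)).val + (Finset.Icc 1 r).val := by
    rw [add_comm ((Finset.Icc (r+1) (2*r)).val), hglue, ← hTeq, ← hms]
  exact add_right_cancel this

lemma icc_map (a b c : ℕ) :
    Multiset.map (· + c) (Finset.Icc a b).val = (Finset.Icc (a + c) (b + c)).val :=
  Multiset.map_add_right_Icc a b c


/-- A family `a : ι → ℕ` of `r = |ι|` positive integers is a perfect extremal multi Skolem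
set if `{1,...,2r}` can be partitioned into `r` pairs with those differences and the
differences sum to `r^2`. -/
def IsPerfectExtremalMultiSkolem {ι : Type*} [Fintype ι] (a : ι → ℕ) : Prop :=
  (∃ s t : ι → ℕ, (∀ i, t i < s i ∧ s i - t i = a i) ∧
      Multiset.map s Finset.univ.val + Multiset.map t Finset.univ.val
        = (Finset.Icc 1 (2 * Fintype.card ι)).val) ∧
  ∑ i, a i = (Fintype.card ι) ^ 2

/-- if `A = {a_1,...,a_n}` and `B = {b_1,...,b_m}` are perfect extremal multi
Skolem sets, then `C = A ∪ {b_1 + 2n, ..., b_m + 2n}` is a perfect extremal multi Skolem set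
of order `n + m`. -/
theorem extremal_union_shifted (n m : ℕ) (a : Fin n → ℕ) (b : Fin m → ℕ)
    (hA : IsPerfectExtremalMultiSkolem a) (hB : IsPerfectExtremalMultiSkolem b) :
    IsPerfectExtremalMultiSkolem (Sum.elim a (fun j : Fin m => b j + 2 * n)) := by
  obtain ⟨⟨s, t, hst, hms⟩, hsa⟩ := hA
  obtain ⟨⟨s', t', hst', hms'⟩, hsb⟩ := hB
  rw [Fintype.card_fin] at hms hsa
  rw [Fintype.card_fin] at hms' hsb
  obtain ⟨hTb, hSb⟩ := low_high s' t' b hst' hms' hsb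
  constructor
  · refine ⟨Sum.elim (fun i => s i + m) (fun j => s' j + 2 * n),
      Sum.elim (fun i => t i + m) (fun j => t' j), ?_, ?_⟩
    · rintro (i | j)
      · have := hst i; simp only [Sum.elim_inl]; omega
      · have := hst' j; simp only [Sum.elim_inr]; omega
    · have hcard : Fintype.card (Fin n ⊕ Fin m) = n + m := by simp
      rw [hcard]
      have huniv : (Finset.univ : Finset (Fin n ⊕ Fin m)).val
          = Multiset.map Sum.inl (Finset.univ : Finset (Fin n)).val
            + Multiset.map Sum.inr (Finset.univ : Finset (Fin m)).val := by
        rw [← Finset.univ_disjSum_univ]; rfl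
      rw [huniv, Multiset.map_add, Multiset.map_add, Multiset.map_map, Multiset.map_map,
        Multiset.map_map, Multiset.map_map]
      simp only [Function.comp_def, Sum.elim_inl, Sum.elim_inr]
      set Un := (Finset.univ : Finset (Fin n)).val
      set Um := (Finset.univ : Finset (Fin m)).val
      have hA2 : Multiset.map (fun i => s i + m) Un + Multiset.map (fun i => t i + m) Un
          = (Finset.Icc (1 + m) (2 * n + m)).val := by
        have e1 : Multiset.map (fun i => s i + m) Un = Multiset.map (· + m) (Multiset.map s Un) := by
          rw [Multiset.map_map]; rfl
        have e2 : Multiset.map (fun i => t i + m) Un = Multiset.map (· + m) (Multiset.map t Un) := by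
          rw [Multiset.map_map]; rfl
        rw [e1, e2, ← Multiset.map_add, hms, icc_map]
      have hB2 : Multiset.map (fun j => s' j + 2 * n) Um
          = (Finset.Icc (m + 1 + 2 * n) (2 * m + 2 * n)).val := by
        have e1 : Multiset.map (fun j => s' j + 2 * n) Um
            = Multiset.map (· + 2 * n) (Multiset.map s' Um) := by
          rw [Multiset.map_map]; rfl
        rw [e1, hSb, icc_map]
      have hrearr : (Finset.Icc (1 + m) (2 * n + m)).val
            + (Finset.Icc (m + 1 + 2 * n) (2 * m + 2 * n)).val + (Finset.Icc 1 m).val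
          = (Finset.Icc 1 m).val + ((Finset.Icc (m + 1) (2 * n + m)).val
            + (Finset.Icc (2 * n + m + 1) (2 * n + 2 * m)).val) := by
        have e1 : 1 + m = m + 1 := by ring
        have e2 : m + 1 + 2 * n = 2 * n + m + 1 := by ring
        have e3 : 2 * m + 2 * n = 2 * n + 2 * m := by ring
        rw [e1, e2, e3]
        abel
      have goalform : Multiset.map (fun i => s i + m) Un
            + Multiset.map (fun j => s' j + 2 * n) Um
            + (Multiset.map (fun i => t i + m) Un + Multiset.map t' Um)
          = Multiset.map (fun i => s i + m) Un + Multiset.map (fun i => t i + m) Un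
            + Multiset.map (fun j => s' j + 2 * n) Um + Multiset.map t' Um := by abel
      rw [goalform, hA2, hB2, hTb, hrearr, icc_glue (m + 1) (2 * n + m) (2 * n + 2 * m) (by omega) (by omega),
        icc_glue 1 m (2 * n + 2 * m) (by omega) (by omega),
        show 2 * (n + m) = 2 * n + 2 * m from by ring]
  · have hcard : Fintype.card (Fin n ⊕ Fin m) = n + m := by simp
    rw [hcard, Fintype.sum_sum_type]
    simp only [Sum.elim_inl, Sum.elim_inr]
    rw [Finset.sum_add_distrib, hsa, hsb, Finset.sum_const, Finset.card_univ, Fintype.card_fin,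
      smul_eq_mul]
    ring
end

section
/- If A = {a_1, ..., a_n} and B = {b_1, ..., b_m} are perfect extremal multi Skolem sets, then E = {a_1 + m, ..., a_n + m} ∪ {b_1 + n, ..., b_m + n} is a perfect extremal multi Skolem set of order n + m. -/
/-! ### Auxiliary lemmas -/

/-- Gauss sum for `Icc 1 r`. -/
lemma gauss_icc (r : ℕ) : 2 * ∑ x ∈ Finset.Icc 1 r, x = r * (r + 1) := by
  induction r with
  | zero => simp
  | succ r ih =>
    have : Finset.Icc 1 (r + 1) = insert (r + 1) (Finset.Icc 1 r) := by
      ext x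
      simp [Finset.mem_Icc, Finset.mem_insert]
      omega
    rw [this, Finset.sum_insert (by simp), Nat.mul_add, ih]
    ring

/-- A finset of `r` positive integers whose doubled sum is at most `r*(r+1)`
must be `{1,...,r}`. -/
lemma min_sum_finset (r : ℕ) : ∀ T : Finset ℕ, T.card = r → (∀ x ∈ T, 1 ≤ x) →
    2 * ∑ x ∈ T, x ≤ r * (r + 1) → T = Finset.Icc 1 r := by
  induction r with
  | zero =>
    intro T hcard _ _
    simpa [Finset.card_eq_zero] using hcard
  | succ r ih =>
    intro T hcard hpos hsum
    have hne : T.Nonempty := Finset.card_pos.mp (by omega)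
    set M := T.max' hne with hM
    have hMmem : M ∈ T := T.max'_mem hne
    have hsub : T ⊆ Finset.Icc 1 M := by
      intro x hx
      simp only [Finset.mem_Icc]
      exact ⟨hpos x hx, T.le_max' x hx⟩
    have hMle : r + 1 ≤ M := by
      have := Finset.card_le_card hsub
      rw [hcard, Nat.card_Icc] at this
      omega
    have hsplit : ∑ x ∈ T, x = M + ∑ x ∈ T.erase M, x := by
      rw [← Finset.add_sum_erase _ _ hMmem]
    have hcard' : (T.erase M).card = r := by
      simp [Finset.card_erase_of_mem hMmem, hcard]
    have hpos' : ∀ x ∈ T.erase M, 1 ≤ x := fun x hx => hpos x (Finset.mem_of_mem_erase hx)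
    have hsum' : 2 * ∑ x ∈ T.erase M, x ≤ r * (r + 1) := by nlinarith [hsplit, hsum, hMle]
    have hT' : T.erase M = Finset.Icc 1 r := ih _ hcard' hpos' hsum'
    have hsumT' : 2 * ∑ x ∈ T.erase M, x = r * (r + 1) := by
      rw [hT']; exact gauss_icc r
    have hMeq : M = r + 1 := by nlinarith [hsplit, hsum, hsumT', hMle]
    have : T = insert M (T.erase M) := (Finset.insert_erase hMmem).symm
    rw [this, hT', hMeq]
    ext x
    simp [Finset.mem_Icc, Finset.mem_insert]
    omega

/-- Adjacent `Ioc` intervals concatenate on the level of multisets. -/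
lemma ioc_val_add (a b c : ℕ) (h1 : a ≤ b) (h2 : b ≤ c) :
    (Finset.Ioc a b).val + (Finset.Ioc b c).val = (Finset.Ioc a c).val := by
  have hdisj : Disjoint (Finset.Ioc a b) (Finset.Ioc b c) := by
    simp only [Finset.disjoint_left, Finset.mem_Ioc]
    intro x hx hx'
    omega
  have := Finset.Ioc_union_Ioc_eq_Ioc h1 h2
  rw [← this, ← Finset.disjUnion_eq_union _ _ hdisj]
  rfl

/-- Key structural fact: in an extremal partition of `{1,...,2r}` the small elements
are exactly `{1,...,r}` and the large ones exactly `{r+1,...,2r}`. -/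
lemma extremal_split {ι : Type*} [Fintype ι] (s t : ι → ℕ) (r : ℕ)
    (hr : Fintype.card ι = r)
    (hst : ∀ i, t i < s i)
    (heq : Multiset.map s Finset.univ.val + Multiset.map t Finset.univ.val
      = (Finset.Icc 1 (2 * r)).val)
    (hsum : ∑ i, (s i - t i) = r ^ 2) :
    Multiset.map t Finset.univ.val = (Finset.Icc 1 r).val ∧
    Multiset.map s Finset.univ.val = (Finset.Icc (r + 1) (2 * r)).val := by
  set Tm := Multiset.map t Finset.univ.val with hTm
  set Sm := Multiset.map s Finset.univ.val with hSm
  have hTle : Tm ≤ (Finset.Icc 1 (2 * r)).val := by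
    rw [← heq]; exact Multiset.le_add_left _ _
  have hTnd : Tm.Nodup := Multiset.nodup_of_le hTle (Finset.Icc 1 (2 * r)).nodup
  set TF : Finset ℕ := ⟨Tm, hTnd⟩ with hTF
  have hTcard : TF.card = r := by
    simp only [hTF, Finset.card_mk, hTm, Multiset.card_map]
    simpa using hr
  have hTpos : ∀ x ∈ TF, 1 ≤ x := by
    intro x hx
    have : x ∈ (Finset.Icc 1 (2 * r)).val := Multiset.mem_of_le hTle hx
    rw [← Finset.mem_def, Finset.mem_Icc] at this
    exact this.1
  -- sums
  have hTsum : ∑ x ∈ TF, x = ∑ i, t i := by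
    rw [Finset.sum_eq_multiset_sum, Finset.sum_eq_multiset_sum]
    show (Tm.map (fun x => x)).sum = _
    rw [Multiset.map_id']
  have hSsum : Sm.sum = ∑ i, s i := (Finset.sum_eq_multiset_sum _ _).symm
  have hseq : ∀ i, s i = t i + (s i - t i) := fun i => by have := hst i; omega
  have hSsum' : ∑ i, s i = ∑ i, t i + r ^ 2 := by
    calc ∑ i, s i = ∑ i, (t i + (s i - t i)) := Finset.sum_congr rfl (fun i _ => hseq i)
    _ = ∑ i, t i + ∑ i, (s i - t i) := Finset.sum_add_distrib
    _ = ∑ i, t i + r ^ 2 := by rw [hsum]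
  have hTsum2 : Tm.sum = ∑ i, t i := (Finset.sum_eq_multiset_sum _ t).symm
  have htotal : ∑ i, s i + ∑ i, t i = ∑ x ∈ Finset.Icc 1 (2 * r), x := by
    have h := congrArg Multiset.sum heq
    rw [Multiset.sum_add] at h
    rw [← hSsum, ← hTsum2, h, Finset.sum_eq_multiset_sum]
    rw [show (fun x => x) = @id ℕ from rfl, Multiset.map_id]
  have hgauss : 2 * ∑ x ∈ Finset.Icc 1 (2 * r), x = 2 * r * (2 * r + 1) := gauss_icc (2 * r)
  have hTsumval : 2 * ∑ x ∈ TF, x ≤ r * (r + 1) := by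
    rw [hTsum]
    nlinarith [hSsum', htotal, hgauss]
  have hTeq : TF = Finset.Icc 1 r := min_sum_finset r TF hTcard hTpos hTsumval
  have hTmeq : Tm = (Finset.Icc 1 r).val := congrArg Finset.val hTeq
  refine ⟨hTmeq, ?_⟩
  have hicc : (Finset.Icc (r + 1) (2 * r)).val + Tm = (Finset.Icc 1 (2 * r)).val := by
    rw [hTmeq]
    have h1 : Finset.Icc 1 r = Finset.Ioc 0 r := by ext x; simp [Finset.mem_Icc, Finset.mem_Ioc]; omega
    have h2 : Finset.Icc (r + 1) (2 * r) = Finset.Ioc r (2 * r) := by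
      ext x; simp [Finset.mem_Icc, Finset.mem_Ioc]
    have h3 : Finset.Icc 1 (2 * r) = Finset.Ioc 0 (2 * r) := by
      ext x; simp [Finset.mem_Icc, Finset.mem_Ioc]; omega
    rw [h1, h2, h3, add_comm]
    exact ioc_val_add 0 r (2 * r) (by omega) (by omega)
  have : Sm + Tm = (Finset.Icc (r + 1) (2 * r)).val + Tm := by rw [heq, hicc]
  exact add_right_cancel this

/-- Shifting an `Ioc` multiset. -/
lemma ioc_val_shift (a b c : ℕ) :
    Multiset.map (· + c) (Finset.Ioc a b).val = (Finset.Ioc (a + c) (b + c)).val := by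
  have := Multiset.map_add_right_Ioc a b c
  simpa [Multiset.Ioc] using this

/-- if `A = {a_1,...,a_n}` and `B = {b_1,...,b_m}` are perfect extremal multi
Skolem sets, then `E = {a_1 + m, ..., a_n + m} ∪ {b_1 + n, ..., b_m + n}` is a perfect
extremal multi Skolem set of order `n + m`. -/
theorem extremal_interleaved (n m : ℕ) (a : Fin n → ℕ) (b : Fin m → ℕ)
    (hA : IsPerfectExtremalMultiSkolem a) (hB : IsPerfectExtremalMultiSkolem b) :
    IsPerfectExtremalMultiSkolem
      (Sum.elim (fun i : Fin n => a i + m) (fun j : Fin m => b j + n)) := by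
  obtain ⟨⟨sA, tA, hA1, hA2⟩, hAsum⟩ := hA
  obtain ⟨⟨sB, tB, hB1, hB2⟩, hBsum⟩ := hB
  rw [Fintype.card_fin] at hA2 hAsum
  rw [Fintype.card_fin] at hB2 hBsum
  have hAsum' : ∑ i, (sA i - tA i) = n ^ 2 := by
    rw [← hAsum]; exact Finset.sum_congr rfl fun i _ => (hA1 i).2
  have hBsum' : ∑ j, (sB j - tB j) = m ^ 2 := by
    rw [← hBsum]; exact Finset.sum_congr rfl fun j _ => (hB1 j).2
  obtain ⟨hAt, hAs⟩ := extremal_split sA tA n (Fintype.card_fin n)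
    (fun i => (hA1 i).1) hA2 hAsum'
  obtain ⟨hBt, hBs⟩ := extremal_split sB tB m (Fintype.card_fin m)
    (fun j => (hB1 j).1) hB2 hBsum'
  constructor
  · refine ⟨Sum.elim (fun i => sA i + m) (fun j => sB j + 2 * n),
      Sum.elim (fun i => tA i) (fun j => tB j + n), ?_, ?_⟩
    · rintro (i | j) <;> simp only [Sum.elim_inl, Sum.elim_inr]
      · have h1 := (hA1 i).1; have h2 := (hA1 i).2
        exact ⟨by omega, by omega⟩
      · have h1 := (hB1 j).1; have h2 := (hB1 j).2
        exact ⟨by omega, by omega⟩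
    · -- the multiset equality
      have huniv : (Finset.univ : Finset (Fin n ⊕ Fin m)).val
          = (Finset.univ : Finset (Fin n)).val.map Sum.inl
            + (Finset.univ : Finset (Fin m)).val.map Sum.inr := by
        rw [← Finset.univ_disjSum_univ, Finset.val_disjSum]
        rfl
      rw [huniv]
      simp only [Multiset.map_add, Multiset.map_map, Function.comp_def, Sum.elim_inl,
        Sum.elim_inr, Fintype.card_sum, Fintype.card_fin]
      have e1 : Multiset.map (fun i => sA i + m) (Finset.univ : Finset (Fin n)).val
          = (Finset.Ioc (n + m) (2 * n + m)).val := by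
        have : Multiset.map (fun i => sA i + m) (Finset.univ : Finset (Fin n)).val
            = Multiset.map (· + m) (Multiset.map sA (Finset.univ : Finset (Fin n)).val) := by
          rw [Multiset.map_map]; rfl
        rw [this, hAs]
        have : Finset.Icc (n + 1) (2 * n) = Finset.Ioc n (2 * n) := by
          ext x; simp [Finset.mem_Icc, Finset.mem_Ioc]
        rw [this, ioc_val_shift]
      have e2 : Multiset.map (fun j => sB j + 2 * n) (Finset.univ : Finset (Fin m)).val
          = (Finset.Ioc (2 * n + m) (2 * n + 2 * m)).val := by
        have : Multiset.map (fun j => sB j + 2 * n) (Finset.univ : Finset (Fin m)).val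
            = Multiset.map (· + 2 * n) (Multiset.map sB (Finset.univ : Finset (Fin m)).val) := by
          rw [Multiset.map_map]; rfl
        rw [this, hBs]
        have : Finset.Icc (m + 1) (2 * m) = Finset.Ioc m (2 * m) := by
          ext x; simp [Finset.mem_Icc, Finset.mem_Ioc]
        rw [this, ioc_val_shift, show m + 2 * n = 2 * n + m by omega,
          show 2 * m + 2 * n = 2 * n + 2 * m by omega]
      have e3 : Multiset.map (fun i => tA i) (Finset.univ : Finset (Fin n)).val
          = (Finset.Ioc 0 n).val := by
        rw [show (fun i => tA i) = tA from rfl, hAt]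
        congr 1
      have e4 : Multiset.map (fun j => tB j + n) (Finset.univ : Finset (Fin m)).val
          = (Finset.Ioc n (n + m)).val := by
        have : Multiset.map (fun j => tB j + n) (Finset.univ : Finset (Fin m)).val
            = Multiset.map (· + n) (Multiset.map tB (Finset.univ : Finset (Fin m)).val) := by
          rw [Multiset.map_map]; rfl
        rw [this, hBt]
        have : Finset.Icc 1 m = Finset.Ioc 0 m := by
          ext x; simp [Finset.mem_Icc, Finset.mem_Ioc]; omega
        rw [this, ioc_val_shift, show 0 + n = n by omega, show m + n = n + m by omega]
      rw [e1, e2, e3, e4]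
      have hfin : Finset.Icc 1 (2 * (n + m)) = Finset.Ioc 0 (2 * n + 2 * m) := by
        ext x; simp [Finset.mem_Icc, Finset.mem_Ioc]; omega
      rw [hfin]
      calc (Finset.Ioc (n + m) (2 * n + m)).val + (Finset.Ioc (2 * n + m) (2 * n + 2 * m)).val
            + ((Finset.Ioc 0 n).val + (Finset.Ioc n (n + m)).val)
          = ((Finset.Ioc 0 n).val + (Finset.Ioc n (n + m)).val)
            + ((Finset.Ioc (n + m) (2 * n + m)).val
              + (Finset.Ioc (2 * n + m) (2 * n + 2 * m)).val) := add_comm _ _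
        _ = (Finset.Ioc 0 (n + m)).val + (Finset.Ioc (n + m) (2 * n + 2 * m)).val := by
            rw [ioc_val_add 0 n (n + m) (by omega) (by omega),
              ioc_val_add (n + m) (2 * n + m) (2 * n + 2 * m) (by omega) (by omega)]
        _ = (Finset.Ioc 0 (2 * n + 2 * m)).val :=
            ioc_val_add 0 (n + m) (2 * n + 2 * m) (by omega) (by omega)
  · rw [Fintype.sum_sumElim, Finset.sum_add_distrib, Finset.sum_add_distrib, hAsum, hBsum]
    simp only [Finset.sum_const, Finset.card_univ, Fintype.card_fin, Fintype.card_sum,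
      smul_eq_mul]
    ring
end
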